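/- arXiv:1904.11403 — 3 statements merged into one kernel-verified Lean document; each statement's English description precedes it below -/
import Mathlib

section
/- Let f ∈ L²((0,1)ⁿ) and h ∈ L²((0,1)ᵐ) be non-constant, and define g(x,ξ) = f(x)·h(ξ). Then the total Sobol sensitivity index of the input x_i for g satisfies S^g_{T,x_i} = λ·S^f_{T,x_i}, where λ = (∫f² dx − f₀²) / (∫f² dx − f₀²h₀²/∫h² dξ), with f₀ = ∫f dx and h₀ = ∫h dξ. -/
open MeasureTheory

noncomputable section SobolDefs

/-- Uniform probability measure on the open unit cube `(0,1)^n`. -/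
def uCube (n : ℕ) : Measure (Fin n → ℝ) :=
  Measure.pi fun _ => volume.restrict (Set.Ioo 0 1)

/-- Mean value of `f`. -/
def mval {α : Type*} [MeasurableSpace α] (μ : Measure α) (f : α → ℝ) : ℝ := ∫ x, f x ∂μ

/-- Integral of the square of `f`. -/
def intSq {α : Type*} [MeasurableSpace α] (μ : Measure α) (f : α → ℝ) : ℝ := ∫ x, (f x) ^ 2 ∂μ

/-- Variance of `f`. -/
def var' {α : Type*} [MeasurableSpace α] (μ : Measure α) (f : α → ℝ) : ℝ := intSq μ f - (mval μ f) ^ 2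

/-- Covariance of `f` and `h`. -/
def cov' {α : Type*} [MeasurableSpace α] (μ : Measure α) (f h : α → ℝ) : ℝ :=
  (∫ x, f x * h x ∂μ) - mval μ f * mval μ h

/-- Conditional mean of `f` obtained by integrating out the coordinate encoded
by the update map `upd` over `(0,1)`. -/
def cMean {α : Type*} [MeasurableSpace α] (upd : α → ℝ → α) (f : α → ℝ) (x : α) : ℝ :=
  ∫ t in Set.Ioo (0 : ℝ) 1, f (upd x t)

/-- Total-effect variance of the coordinate encoded by `upd`. -/
def tVar {α : Type*} [MeasurableSpace α] (μ : Measure α) (upd : α → ℝ → α) (f : α → ℝ) : ℝ :=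
  intSq μ f - ∫ x, (cMean upd f x) ^ 2 ∂μ

/-- Total Sobol sensitivity index of the coordinate encoded by `upd`. -/
def sobolT {α : Type*} [MeasurableSpace α] (μ : Measure α) (upd : α → ℝ → α) (f : α → ℝ) : ℝ :=
  tVar μ upd f / var' μ f

/-- Updating the `i`-th coordinate of a point of the cube. -/
def updC {n : ℕ} (i : Fin n) : (Fin n → ℝ) → ℝ → (Fin n → ℝ) :=
  fun x t => Function.update x i t

/-- Updating the `i`-th coordinate of the first component of a product point. -/
def updF {n : ℕ} {β : Type*} (i : Fin n) : ((Fin n → ℝ) × β) → ℝ → ((Fin n → ℝ) × β) :=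
  fun p t => (Function.update p.1 i t, p.2)

end SobolDefs

/-!
By Fubini every quantity in a Sobol index of `g(x, ξ) = f(x) h(ξ)` factors:
`∫ g² = ∫ f² · ∫ h²`, `g₀ = f₀ h₀`, and integrating out `x_i` commutes with the factor `h(ξ)`,
so the total-effect variance of `x_i` for `g` is that for `f` times `∫ h²`. Hence
`S^g_{T,x_i} = (∫ h²) · (∫ f² − ∫ (∫ f dx_i)²) / (∫ f² ∫ h² − f₀² h₀²)`, which is `λ · S^f_{T,x_i}`.
-/

instance uCube.sigmaFinite (k : ℕ) : SigmaFinite (uCube k) := by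
  unfold uCube; infer_instance

section ProductFunction

variable {α β : Type*} [MeasurableSpace α] [MeasurableSpace β]
  {μ : Measure α} {ν : Measure β} [SigmaFinite μ] [SigmaFinite ν]

theorem intSq_prod_mul (f : α → ℝ) (h : β → ℝ) :
    intSq (μ.prod ν) (fun p => f p.1 * h p.2) = intSq μ f * intSq ν h := by
  simp only [intSq, mul_pow]
  exact integral_prod_mul (fun x => f x ^ 2) (fun y => h y ^ 2)

theorem mval_prod_mul (f : α → ℝ) (h : β → ℝ) :
    mval (μ.prod ν) (fun p => f p.1 * h p.2) = mval μ f * mval ν h :=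
  integral_prod_mul f h

theorem var'_prod_mul (f : α → ℝ) (h : β → ℝ) :
    var' (μ.prod ν) (fun p => f p.1 * h p.2) =
      intSq μ f * intSq ν h - (mval μ f * mval ν h) ^ 2 := by
  rw [var', intSq_prod_mul, mval_prod_mul]

end ProductFunction

theorem cMean_updF_mul {n : ℕ} {β : Type*} [MeasurableSpace β] (i : Fin n)
    (f : (Fin n → ℝ) → ℝ) (h : β → ℝ) (p : (Fin n → ℝ) × β) :
    cMean (updF i) (fun q => f q.1 * h q.2) p = cMean (updC i) f p.1 * h p.2 :=
  integral_mul_const (h p.2) _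

theorem tVar_updF_prod_mul {n : ℕ} {β : Type*} [MeasurableSpace β] {μ : Measure (Fin n → ℝ)}
    {ν : Measure β} [SigmaFinite μ] [SigmaFinite ν] (i : Fin n) (f : (Fin n → ℝ) → ℝ)
    (h : β → ℝ) :
    tVar (μ.prod ν) (updF i) (fun p => f p.1 * h p.2) = tVar μ (updC i) f * intSq ν h := by
  have hcond : ∫ p, cMean (updF i) (fun q => f q.1 * h q.2) p ^ 2 ∂(μ.prod ν) =
      (∫ x, cMean (updC i) f x ^ 2 ∂μ) * intSq ν h := by
    simp only [cMean_updF_mul, mul_pow]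
    exact integral_prod_mul (fun x => cMean (updC i) f x ^ 2) (fun y => h y ^ 2)
  rw [tVar, tVar, intSq_prod_mul, hcond, sub_mul]

theorem stmt0_general {n m : ℕ} (i : Fin n) (f : (Fin n → ℝ) → ℝ) (h : (Fin m → ℝ) → ℝ)
    (hvf : 0 < var' (uCube n) f)
    (hvg : 0 < var' ((uCube n).prod (uCube m)) fun p => f p.1 * h p.2) :
    sobolT ((uCube n).prod (uCube m)) (updF i) (fun p => f p.1 * h p.2) =
      ((intSq (uCube n) f - (mval (uCube n) f) ^ 2) /
          (intSq (uCube n) f -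
            (mval (uCube n) f) ^ 2 * (mval (uCube m) h) ^ 2 / intSq (uCube m) h)) *
        sobolT (uCube n) (updC i) f := by
  rw [var'_prod_mul] at hvg
  rw [var'] at hvf
  have hB : intSq (uCube m) h ≠ 0 := by
    rintro hB0
    rw [hB0, mul_zero, zero_sub] at hvg
    exact (neg_nonpos.mpr (sq_nonneg _)).not_gt hvg
  have hvf0 := hvf.ne'
  have hvg0 := hvg.ne'
  rw [sobolT, sobolT, tVar_updF_prod_mul, var'_prod_mul, var']
  field_simp

/-- Case 1 (Theorem 3.1, equality): for `g(x,ξ) = f(x)·h(ξ)`,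
`S^g_{T,x_i} = λ_{f,h} · S^f_{T,x_i}`. -/
theorem stmt0 {n m : ℕ} (i : Fin n) (f : (Fin n → ℝ) → ℝ) (h : (Fin m → ℝ) → ℝ)
    (hf : MemLp f 2 (uCube n)) (hh : MemLp h 2 (uCube m))
    (hvf : 0 < var' (uCube n) f) (hvh : 0 < var' (uCube m) h)
    (hvg : 0 < var' ((uCube n).prod (uCube m)) fun p => f p.1 * h p.2) :
    sobolT ((uCube n).prod (uCube m)) (updF i) (fun p => f p.1 * h p.2) =
      ((intSq (uCube n) f - (mval (uCube n) f) ^ 2) /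
          (intSq (uCube n) f -
            (mval (uCube n) f) ^ 2 * (mval (uCube m) h) ^ 2 / intSq (uCube m) h)) *
        sobolT (uCube n) (updC i) f :=
  stmt0_general i f h hvf hvg
end

section
/- Let f ∈ L²((0,1)ⁿ) and h ∈ L²((0,1)ᵐ) be non-constant, and define g(x,ξ) = f(x) + h(ξ). Then S^g_{T,x_i} = μ·S^f_{T,x_i} where μ = 1/(1 + Var(h)/Var(f)) = Var(f)/(Var(f)+Var(h)). In particular S^g_{T,x_i} ≤ S^f_{T,x_i}. -/
open MeasureTheory

/-! Integrating out `x_i` leaves `h(ξ)` untouched, so the conditional mean of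
`g = f ⊕ h` is `A(x) + h(ξ)`, where `A` is the conditional mean of `f`. Expanding both squares
over the product measure, the `h`-terms cancel and the cross terms agree because `∫ A = ∫ f`;
hence the total-effect variance of `g` equals that of `f`, while `Var g = Var f + Var h`.
The inequality then only needs the numerator to be nonnegative, which is Jensen's
inequality `A² ≤ ∫ f(·, t)² dt` on each slice. -/

open MeasureTheory ProbabilityTheory Set

local notation "ν₀₁" => volume.restrict (Ioo (0 : ℝ) 1)

instance isProbabilityMeasure_restrict_Ioo_zero_one : IsProbabilityMeasure ν₀₁ :=
  ⟨by simp⟩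

theorem measurePreserving_update {ι : Type*} [Fintype ι] [DecidableEq ι] {X : ι → Type*}
    [∀ j, MeasurableSpace (X j)] (μ : ∀ j, Measure (X j)) [∀ j, IsProbabilityMeasure (μ j)]
    (i : ι) :
    MeasurePreserving (fun p : (∀ j, X j) × X i => Function.update p.1 i p.2)
      ((Measure.pi μ).prod (μ i)) (Measure.pi μ) := by
  refine ⟨measurable_update', (Measure.pi_eq fun s hs => ?_).symm⟩
  have hpre : (fun p : (∀ j, X j) × X i => Function.update p.1 i p.2) ⁻¹' univ.pi s
      = univ.pi (Function.update s i univ) ×ˢ s i := by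
    ext ⟨x, t⟩
    simp only [mem_preimage, mem_prod, mem_univ_pi]
    grind
  rw [Measure.map_apply measurable_update' (.univ_pi hs), hpre, Measure.prod_prod,
    Measure.pi_pi, ← Finset.mul_prod_erase _ _ (Finset.mem_univ i),
    ← Finset.mul_prod_erase _ (fun j => μ j (s j)) (Finset.mem_univ i), Function.update_self,
    measure_univ, one_mul, mul_comm]
  congr 1
  exact Finset.prod_congr rfl fun j hj => by rw [Function.update_of_ne (Finset.ne_of_mem_erase hj)]

theorem sq_integral_le_integral_sq {Ω : Type*} [MeasurableSpace Ω] {μ : Measure Ω}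
    [IsProbabilityMeasure μ] {X : Ω → ℝ} (hX : MemLp X 2 μ) :
    (∫ ω, X ω ∂μ) ^ 2 ≤ ∫ ω, X ω ^ 2 ∂μ := by
  have := variance_nonneg X μ
  rw [variance_eq_sub hX] at this
  simpa using this

theorem var'_nonneg {α : Type*} [MeasurableSpace α] {μ : Measure α} [IsProbabilityMeasure μ]
    {f : α → ℝ} (hf : MemLp f 2 μ) : 0 ≤ var' μ f :=
  sub_nonneg.2 (sq_integral_le_integral_sq hf)

section SeparableSum

variable {α β : Type*} [MeasurableSpace α] [MeasurableSpace β] {μ : Measure α} {ν : Measure β}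
  [IsProbabilityMeasure μ] [IsProbabilityMeasure ν] {f : α → ℝ} {h : β → ℝ}

theorem mval_add_prod (hf : Integrable f μ) (hh : Integrable h ν) :
    mval (μ.prod ν) (fun p => f p.1 + h p.2) = mval μ f + mval ν h := by
  rw [mval, integral_add (hf.comp_fst ν) (hh.comp_snd μ), integral_fun_fst, integral_fun_snd]
  simp [mval]

theorem intSq_add_prod (hf : MemLp f 2 μ) (hh : MemLp h 2 ν) :
    intSq (μ.prod ν) (fun p => f p.1 + h p.2) =
      intSq μ f + 2 * (mval μ f * mval ν h) + intSq ν h := by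
  have hfh : Integrable (fun p : α × β => 2 * (f p.1 * h p.2)) (μ.prod ν) :=
    ((hf.integrable one_le_two).mul_prod (hh.integrable one_le_two)).const_mul 2
  have hsq : Integrable (fun p : α × β => f p.1 ^ 2 + h p.2 ^ 2) (μ.prod ν) :=
    (hf.integrable_sq.comp_fst ν).add (hh.integrable_sq.comp_snd μ)
  simp only [intSq, add_sq', mul_assoc]
  rw [integral_add hsq hfh,
    integral_add (hf.integrable_sq.comp_fst ν) (hh.integrable_sq.comp_snd μ),
    integral_const_mul, integral_prod_mul, integral_fun_fst (fun x => f x ^ 2),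
    integral_fun_snd (fun y => h y ^ 2)]
  simp only [mval, probReal_univ, one_smul]
  ring

theorem var'_add_prod (hf : MemLp f 2 μ) (hh : MemLp h 2 ν) :
    var' (μ.prod ν) (fun p => f p.1 + h p.2) = var' μ f + var' ν h := by
  rw [var', var', var', intSq_add_prod hf hh,
    mval_add_prod (hf.integrable one_le_two) (hh.integrable one_le_two)]
  ring

end SeparableSum

section IntegrateOut

variable {α : Type*} [MeasurableSpace α] {μ : Measure α} [IsProbabilityMeasure μ]
  {upd : α → ℝ → α}

theorem integral_integral_comp_update
    (hupd : MeasurePreserving (fun p : α × ℝ => upd p.1 p.2) (μ.prod ν₀₁) μ) {G : α → ℝ}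
    (hG : Integrable G μ) : ∫ x, (∫ t in Ioo 0 1, G (upd x t)) ∂μ = ∫ x, G x ∂μ := by
  refine (integral_prod _ (hupd.integrable_comp_of_integrable hG)).symm.trans ?_
  have := integral_map hupd.aemeasurable (hupd.map_eq ▸ hG.aestronglyMeasurable)
  rw [hupd.map_eq] at this
  exact this.symm

theorem mval_cMean
    (hupd : MeasurePreserving (fun p : α × ℝ => upd p.1 p.2) (μ.prod ν₀₁) μ) {F : α → ℝ}
    (hF : Integrable F μ) : mval μ (cMean upd F) = mval μ F :=
  integral_integral_comp_update hupd hF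

theorem ae_sq_cMean_le
    (hupd : MeasurePreserving (fun p : α × ℝ => upd p.1 p.2) (μ.prod ν₀₁) μ) {F : α → ℝ}
    (hF : MemLp F 2 μ) : ∀ᵐ x ∂μ, cMean upd F x ^ 2 ≤ ∫ t in Ioo 0 1, F (upd x t) ^ 2 := by
  have hq := hF.comp_measurePreserving hupd
  filter_upwards [(hq.integrable one_le_two).prod_right_ae, hq.integrable_sq.prod_right_ae]
    with x hx hx2
  exact sq_integral_le_integral_sq ((memLp_two_iff_integrable_sq hx.aestronglyMeasurable).2 hx2)

theorem memLp_cMean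
    (hupd : MeasurePreserving (fun p : α × ℝ => upd p.1 p.2) (μ.prod ν₀₁) μ) {F : α → ℝ}
    (hF : MemLp F 2 μ) : MemLp (cMean upd F) 2 μ := by
  have hq := hF.comp_measurePreserving hupd
  have hmeas : AEStronglyMeasurable (cMean upd F) μ :=
    (hq.integrable one_le_two).integral_prod_left.aestronglyMeasurable
  refine (memLp_two_iff_integrable_sq hmeas).2 <|
    hq.integrable_sq.integral_prod_left.mono' (hmeas.pow 2) ?_
  filter_upwards [ae_sq_cMean_le hupd hF] with x hx
  rwa [Real.norm_eq_abs, abs_of_nonneg (sq_nonneg _)]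

theorem tVar_nonneg
    (hupd : MeasurePreserving (fun p : α × ℝ => upd p.1 p.2) (μ.prod ν₀₁) μ) {F : α → ℝ}
    (hF : MemLp F 2 μ) : 0 ≤ tVar μ upd F := by
  have hq := hF.comp_measurePreserving hupd
  refine sub_nonneg.2 ?_
  calc ∫ x, cMean upd F x ^ 2 ∂μ ≤ ∫ x, (∫ t in Ioo 0 1, F (upd x t) ^ 2) ∂μ :=
        integral_mono_ae (memLp_cMean hupd hF).integrable_sq hq.integrable_sq.integral_prod_left
          (ae_sq_cMean_le hupd hF)
    _ = intSq μ F := integral_integral_comp_update hupd hF.integrable_sq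

end IntegrateOut

section SobolIndex

variable {α β : Type*} [MeasurableSpace α] [MeasurableSpace β] {μ : Measure α} {ν : Measure β}
  [IsProbabilityMeasure μ] [IsProbabilityMeasure ν] {upd : α → ℝ → α} {f : α → ℝ} {h : β → ℝ}

theorem cMean_prod_add {x : α} (hx : Integrable (fun t => f (upd x t)) ν₀₁) (y : β) :
    cMean (fun p t => (upd p.1 t, p.2)) (fun p => f p.1 + h p.2) (x, y) =
      cMean upd f x + h y := by
  change ∫ t in Ioo 0 1, f (upd x t) + h y = _
  rw [integral_add hx (integrable_const _), integral_const]
  simp [cMean]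

theorem tVar_add_prod
    (hupd : MeasurePreserving (fun p : α × ℝ => upd p.1 p.2) (μ.prod ν₀₁) μ)
    (hf : MemLp f 2 μ) (hh : MemLp h 2 ν) :
    tVar (μ.prod ν) (fun p t => (upd p.1 t, p.2)) (fun p => f p.1 + h p.2) = tVar μ upd f := by
  have hcMean : ∀ᵐ p ∂μ.prod ν,
      cMean (fun p t => (upd p.1 t, p.2)) (fun p => f p.1 + h p.2) p ^ 2 =
        (cMean upd f p.1 + h p.2) ^ 2 := by
    filter_upwards [Measure.quasiMeasurePreserving_fst.ae
      (hupd.integrable_comp_of_integrable (hf.integrable one_le_two)).prod_right_ae] with p hp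
    rw [cMean_prod_add hp]
  rw [tVar, tVar, integral_congr_ae hcMean, ← intSq.eq_1, ← intSq.eq_1,
    intSq_add_prod (memLp_cMean hupd hf) hh, intSq_add_prod hf hh,
    mval_cMean hupd (hf.integrable one_le_two)]
  ring

theorem sobolT_add_prod
    (hupd : MeasurePreserving (fun p : α × ℝ => upd p.1 p.2) (μ.prod ν₀₁) μ)
    (hf : MemLp f 2 μ) (hh : MemLp h 2 ν) (hvf : var' μ f ≠ 0) :
    sobolT (μ.prod ν) (fun p t => (upd p.1 t, p.2)) (fun p => f p.1 + h p.2) =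
      var' μ f / (var' μ f + var' ν h) * sobolT μ upd f := by
  rw [sobolT, sobolT, tVar_add_prod hupd hf hh, var'_add_prod hf hh]
  field_simp

theorem sobolT_add_prod_le
    (hupd : MeasurePreserving (fun p : α × ℝ => upd p.1 p.2) (μ.prod ν₀₁) μ)
    (hf : MemLp f 2 μ) (hh : MemLp h 2 ν) (hvf : 0 < var' μ f) :
    sobolT (μ.prod ν) (fun p t => (upd p.1 t, p.2)) (fun p => f p.1 + h p.2) ≤
      sobolT μ upd f := by
  rw [sobolT, sobolT, tVar_add_prod hupd hf hh, var'_add_prod hf hh]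
  exact div_le_div_of_nonneg_left (tVar_nonneg hupd hf) hvf
    (le_add_of_nonneg_right (var'_nonneg hh))

end SobolIndex

instance isProbabilityMeasure_uCube (n : ℕ) : IsProbabilityMeasure (uCube n) := by
  unfold uCube
  infer_instance

theorem stmt3_general {n m : ℕ} (i : Fin n) (f : (Fin n → ℝ) → ℝ) (h : (Fin m → ℝ) → ℝ)
    (hf : MemLp f 2 (uCube n)) (hh : MemLp h 2 (uCube m))
    (hvf : 0 < var' (uCube n) f) :
    sobolT ((uCube n).prod (uCube m)) (updF i) (fun p => f p.1 + h p.2) =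
        (var' (uCube n) f / (var' (uCube n) f + var' (uCube m) h)) *
          sobolT (uCube n) (updC i) f ∧
      sobolT ((uCube n).prod (uCube m)) (updF i) (fun p => f p.1 + h p.2) ≤
        sobolT (uCube n) (updC i) f := by
  have hupd : MeasurePreserving (fun p => updC i p.1 p.2) ((uCube n).prod ν₀₁) (uCube n) :=
    measurePreserving_update _ i
  exact ⟨sobolT_add_prod hupd hf hh hvf.ne', sobolT_add_prod_le hupd hf hh hvf⟩

/-- Case 2 (Theorem 3.2): for `g(x,ξ) = f(x) + h(ξ)`,
`S^g_{T,x_i} = μ_{f,h} · S^f_{T,x_i}` with `μ = Var f / (Var f + Var h)`;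
in particular `S^g_{T,x_i} ≤ S^f_{T,x_i}`. -/
theorem stmt3 {n m : ℕ} (i : Fin n) (f : (Fin n → ℝ) → ℝ) (h : (Fin m → ℝ) → ℝ)
    (hf : MemLp f 2 (uCube n)) (hh : MemLp h 2 (uCube m))
    (hvf : 0 < var' (uCube n) f) (hvh : 0 < var' (uCube m) h) :
    sobolT ((uCube n).prod (uCube m)) (updF i) (fun p => f p.1 + h p.2) =
        (var' (uCube n) f / (var' (uCube n) f + var' (uCube m) h)) *
          sobolT (uCube n) (updC i) f ∧
      sobolT ((uCube n).prod (uCube m)) (updF i) (fun p => f p.1 + h p.2) ≤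
        sobolT (uCube n) (updC i) f :=
  stmt3_general i f h hf hh hvf
end

section
/- Let f, h ∈ L²((0,1)ⁿ) with Cov(f,h) = (fh)₀ − f₀h₀ ≥ 0, and define g = f + h. Then S^g_{T,x_i} ≤ (√(S^f_{T,x_i}·Var(f)) + √(S^h_{T,x_i}·Var(h)))² / (Var(f) + Var(h)). -/
open MeasureTheory

/-!
Let `P` be the conditional mean that integrates out `xᵢ`. Splitting the cube as
`(0,1) × (0,1)ⁿ⁻¹`, Fubini shows that `P` is the orthogonal projection of `L²` onto the functions
not depending on `xᵢ`, so `Var(F)_{T,xᵢ} = ‖F - P F‖²`. As `P` is linear, Minkowski's inequality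
gives `√Var(f + h)_{T,xᵢ} ≤ √Var(f)_{T,xᵢ} + √Var(h)_{T,xᵢ}`, while
`Var(f + h) = Var f + Var h + 2 Cov(f, h) ≥ Var f + Var h`. Dividing the two bounds gives the claim.
-/

open MeasureTheory ProbabilityTheory

section L2

variable {α : Type*} [MeasurableSpace α] {μ : Measure α} {a b : α → ℝ}

theorem integral_mul_eq_inner_toLp (ha : MemLp a 2 μ) (hb : MemLp b 2 μ) :
    ∫ x, a x * b x ∂μ = inner ℝ (ha.toLp a) (hb.toLp b) := by
  rw [L2.inner_def]
  refine integral_congr_ae ?_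
  filter_upwards [ha.coeFn_toLp, hb.coeFn_toLp] with x hax hbx
  simp [hax, hbx, mul_comm]

theorem integral_sq_eq_norm_toLp_sq (ha : MemLp a 2 μ) :
    ∫ x, a x ^ 2 ∂μ = ‖ha.toLp a‖ ^ 2 := by
  simp_rw [sq, integral_mul_eq_inner_toLp ha ha, real_inner_self_eq_norm_mul_norm]

theorem integral_sub_sq (ha : MemLp a 2 μ) (hb : MemLp b 2 μ) :
    ∫ x, (a x - b x) ^ 2 ∂μ =
      ∫ x, a x ^ 2 ∂μ - 2 * ∫ x, a x * b x ∂μ + ∫ x, b x ^ 2 ∂μ := by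
  have hsub : ∫ x, (a x - b x) ^ 2 ∂μ = ‖ha.toLp a - hb.toLp b‖ ^ 2 := by
    rw [← MemLp.toLp_sub]
    exact integral_sq_eq_norm_toLp_sq _
  rw [hsub, norm_sub_sq_real, integral_sq_eq_norm_toLp_sq ha, integral_sq_eq_norm_toLp_sq hb,
    integral_mul_eq_inner_toLp ha hb]

theorem integral_add_sq_le (ha : MemLp a 2 μ) (hb : MemLp b 2 μ) :
    ∫ x, (a x + b x) ^ 2 ∂μ ≤ (√(∫ x, a x ^ 2 ∂μ) + √(∫ x, b x ^ 2 ∂μ)) ^ 2 := by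
  have hadd : ∫ x, (a x + b x) ^ 2 ∂μ = ‖ha.toLp a + hb.toLp b‖ ^ 2 := by
    rw [← MemLp.toLp_add]
    exact integral_sq_eq_norm_toLp_sq _
  rw [hadd, integral_sq_eq_norm_toLp_sq ha, integral_sq_eq_norm_toLp_sq hb,
    Real.sqrt_sq (norm_nonneg _), Real.sqrt_sq (norm_nonneg _)]
  gcongr
  exact norm_add_le _ _

theorem sq_integral_le_integral_sq_s6 [IsProbabilityMeasure μ] (ha : MemLp a 2 μ) :
    (∫ x, a x ∂μ) ^ 2 ≤ ∫ x, a x ^ 2 ∂μ := by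
  have := variance_nonneg a μ
  rw [variance_eq_sub ha] at this
  simpa using this

end L2

section Variance

variable {α : Type*} [MeasurableSpace α] {μ : Measure α} [IsProbabilityMeasure μ]
  {f h : α → ℝ}

theorem var'_eq_variance (hf : MemLp f 2 μ) : var' μ f = variance f μ := by
  rw [variance_eq_sub hf]
  rfl

theorem cov'_eq_covariance (hf : MemLp f 2 μ) (hh : MemLp h 2 μ) :
    cov' μ f h = cov[f, h; μ] := by
  rw [covariance_eq_sub hf hh]
  rfl

theorem var'_add (hf : MemLp f 2 μ) (hh : MemLp h 2 μ) :
    var' μ (f + h) = var' μ f + 2 * cov' μ f h + var' μ h := by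
  rw [var'_eq_variance (hf.add hh), var'_eq_variance hf, var'_eq_variance hh,
    cov'_eq_covariance hf hh, variance_add hf hh]

end Variance

section SliceMean

variable {α β : Type*} [MeasurableSpace α] [MeasurableSpace β] {ν : Measure α} {μ : Measure β}
  [IsProbabilityMeasure ν] [SFinite μ]

noncomputable def sliceMean (ν : Measure α) (G : α × β → ℝ) (y : β) : ℝ := ∫ t, G (t, y) ∂ν

theorem memLp_sliceMean {G : α × β → ℝ} (hG : MemLp G 2 (ν.prod μ)) :
    MemLp (sliceMean ν G) 2 μ := by
  have hGswap : AEStronglyMeasurable (fun z : β × α => G z.swap) (μ.prod ν) :=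
    hG.aestronglyMeasurable.prod_swap
  have hmeas : AEStronglyMeasurable (sliceMean ν G) μ := hGswap.integral_prod_right'
  have hsq : Integrable (fun z => G z ^ 2) (ν.prod μ) := hG.integrable_sq
  have hjensen : ∀ᵐ y ∂μ, ‖sliceMean ν G y ^ 2‖ ≤ ∫ t, G (t, y) ^ 2 ∂ν := by
    filter_upwards [hsq.prod_left_ae, hGswap.prodMk_left] with y hsq_y hmeas_y
    rw [Real.norm_of_nonneg (sq_nonneg _)]
    exact sq_integral_le_integral_sq_s6 ((memLp_two_iff_integrable_sq hmeas_y).2 hsq_y)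
  exact (memLp_two_iff_integrable_sq hmeas).2
    (hsq.integral_prod_right.mono' (hmeas.pow 2) hjensen)

theorem sliceMean_add {G H : α × β → ℝ} (hG : Integrable G (ν.prod μ))
    (hH : Integrable H (ν.prod μ)) :
    sliceMean ν (G + H) =ᵐ[μ] sliceMean ν G + sliceMean ν H := by
  filter_upwards [hG.prod_left_ae, hH.prod_left_ae] with y hG_y hH_y
  exact integral_add hG_y hH_y

theorem integral_sliceMean_mul {G : α × β → ℝ} (hG : MemLp G 2 (ν.prod μ)) :
    ∫ z, sliceMean ν G z.2 * G z ∂(ν.prod μ) = ∫ z, sliceMean ν G z.2 ^ 2 ∂(ν.prod μ) := by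
  have hS : MemLp (fun z : α × β => sliceMean ν G z.2) 2 (ν.prod μ) :=
    (memLp_sliceMean hG).comp_measurePreserving measurePreserving_snd
  rw [integral_prod_symm (fun z => sliceMean ν G z.2 * G z) (hS.integrable_mul hG),
    integral_fun_snd (fun y => sliceMean ν G y ^ 2)]
  simp [integral_const_mul, sliceMean, sq]

end SliceMean

instance : IsProbabilityMeasure (volume.restrict (Set.Ioo (0 : ℝ) 1)) := ⟨by simp⟩

section Resampling

variable {α β : Type*} [MeasurableSpace α] [MeasurableSpace β] {μ : Measure α} {μ' : Measure β}
  [SFinite μ'] {e : α ≃ᵐ ℝ × β} {upd : α → ℝ → α}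

theorem cMean_eq_sliceMean (hupd : ∀ x t, upd x t = e.symm (t, (e x).2)) (F : α → ℝ) :
    cMean upd F = fun x => sliceMean (volume.restrict (Set.Ioo 0 1)) (F ∘ e.symm) (e x).2 := by
  ext x
  simp only [cMean, sliceMean, hupd, Function.comp_apply]

variable (he : MeasurePreserving e μ ((volume.restrict (Set.Ioo 0 1)).prod μ'))
  (hupd : ∀ x t, upd x t = e.symm (t, (e x).2))
include he hupd

theorem memLp_cMean_s6 {F : α → ℝ} (hF : MemLp F 2 μ) : MemLp (cMean upd F) 2 μ := by
  rw [cMean_eq_sliceMean hupd]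
  exact (memLp_sliceMean (hF.comp_measurePreserving he.symm)).comp_measurePreserving
    (measurePreserving_snd.comp he)

theorem cMean_add [IsFiniteMeasure μ'] {f h : α → ℝ} (hf : MemLp f 2 μ) (hh : MemLp h 2 μ) :
    cMean upd (f + h) =ᵐ[μ] cMean upd f + cMean upd h := by
  have hslice := sliceMean_add ((hf.comp_measurePreserving he.symm).integrable one_le_two)
    ((hh.comp_measurePreserving he.symm).integrable one_le_two)
  filter_upwards [(measurePreserving_snd.comp he).quasiMeasurePreserving.ae hslice] with x hx
  simp only [cMean_eq_sliceMean hupd, Pi.add_apply]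
  exact hx

theorem integral_mul_cMean {F : α → ℝ} (hF : MemLp F 2 μ) :
    ∫ x, F x * cMean upd F x ∂μ = ∫ x, cMean upd F x ^ 2 ∂μ := by
  set S := sliceMean (volume.restrict (Set.Ioo 0 1)) (F ∘ e.symm)
  calc ∫ x, F x * cMean upd F x ∂μ
      = ∫ z, S z.2 * (F ∘ e.symm) z ∂((volume.restrict (Set.Ioo 0 1)).prod μ') := by
        rw [← he.integral_comp', cMean_eq_sliceMean hupd]
        simp [S, mul_comm]
    _ = ∫ z, S z.2 ^ 2 ∂((volume.restrict (Set.Ioo 0 1)).prod μ') :=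
        integral_sliceMean_mul (hF.comp_measurePreserving he.symm)
    _ = ∫ x, cMean upd F x ^ 2 ∂μ := by
        rw [← he.integral_comp', cMean_eq_sliceMean hupd]

theorem tVar_eq_integral_sub_sq {F : α → ℝ} (hF : MemLp F 2 μ) :
    tVar μ upd F = ∫ x, (F x - cMean upd F x) ^ 2 ∂μ := by
  rw [integral_sub_sq hF (memLp_cMean_s6 he hupd hF), integral_mul_cMean he hupd hF, tVar, intSq]
  ring

theorem tVar_add_le [IsFiniteMeasure μ'] {f h : α → ℝ} (hf : MemLp f 2 μ)
    (hh : MemLp h 2 μ) :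
    tVar μ upd (f + h) ≤ (√(tVar μ upd f) + √(tVar μ upd h)) ^ 2 := by
  rw [tVar_eq_integral_sub_sq he hupd hf, tVar_eq_integral_sub_sq he hupd hh,
    tVar_eq_integral_sub_sq he hupd (hf.add hh)]
  calc ∫ x, ((f + h) x - cMean upd (f + h) x) ^ 2 ∂μ
      = ∫ x, ((f x - cMean upd f x) + (h x - cMean upd h x)) ^ 2 ∂μ := by
        refine integral_congr_ae ?_
        filter_upwards [cMean_add he hupd hf hh] with x hx
        rw [Pi.add_apply, hx, Pi.add_apply]
        ring
    _ ≤ _ :=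
        integral_add_sq_le (hf.sub (memLp_cMean_s6 he hupd hf)) (hh.sub (memLp_cMean_s6 he hupd hh))

end Resampling

instance (n : ℕ) : IsProbabilityMeasure (uCube n) := by
  unfold uCube
  infer_instance

theorem measurePreserving_piFinSuccAbove_uCube {m : ℕ} (i : Fin (m + 1)) :
    MeasurePreserving (MeasurableEquiv.piFinSuccAbove (fun _ => ℝ) i) (uCube (m + 1))
      ((volume.restrict (Set.Ioo 0 1)).prod (uCube m)) :=
  measurePreserving_piFinSuccAbove (fun _ => volume.restrict (Set.Ioo 0 1)) i

theorem updC_eq_piFinSuccAbove_symm {m : ℕ} (i : Fin (m + 1)) (x : Fin (m + 1) → ℝ) (t : ℝ) :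
    updC i x t = (MeasurableEquiv.piFinSuccAbove (fun _ => ℝ) i).symm
      (t, (MeasurableEquiv.piFinSuccAbove (fun _ => ℝ) i x).2) := by
  exact (Fin.insertNth_removeNth i t x).symm

theorem tVar_updC_add_le {n : ℕ} (i : Fin n) {f h : (Fin n → ℝ) → ℝ}
    (hf : MemLp f 2 (uCube n)) (hh : MemLp h 2 (uCube n)) :
    tVar (uCube n) (updC i) (f + h) ≤
      (√(tVar (uCube n) (updC i) f) + √(tVar (uCube n) (updC i) h)) ^ 2 := by
  obtain ⟨m, rfl⟩ : ∃ m, n = m + 1 := ⟨n - 1, by have := i.pos; omega⟩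
  exact tVar_add_le (measurePreserving_piFinSuccAbove_uCube i) (updC_eq_piFinSuccAbove_symm i)
    hf hh

theorem stmt6_general {n : ℕ} (i : Fin n) (f h : (Fin n → ℝ) → ℝ)
    (hf : MemLp f 2 (uCube n)) (hh : MemLp h 2 (uCube n))
    (hvf : 0 < var' (uCube n) f) (hvh : 0 < var' (uCube n) h)
    (hcov : 0 ≤ cov' (uCube n) f h) :
    sobolT (uCube n) (updC i) (f + h) ≤
      (Real.sqrt (sobolT (uCube n) (updC i) f * var' (uCube n) f) +
          Real.sqrt (sobolT (uCube n) (updC i) h * var' (uCube n) h)) ^ 2 /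
        (var' (uCube n) f + var' (uCube n) h) := by
  have hvar : var' (uCube n) f + var' (uCube n) h ≤ var' (uCube n) (f + h) := by
    rw [var'_add hf hh]
    linarith
  rw [sobolT, sobolT, sobolT, div_mul_cancel₀ _ hvf.ne', div_mul_cancel₀ _ hvh.ne']
  exact div_le_div₀ (by positivity) (tVar_updC_add_le i hf hh) (by positivity) hvar

/-- Case 4 (Theorem B1): if `Cov(f,h) ≥ 0` and `g = f + h`, then
`S^g_{T,x_i} ≤ (√(S^f Var f) + √(S^h Var h))² / (Var f + Var h)`. -/
theorem stmt6 {n : ℕ} (i : Fin n) (f h : (Fin n → ℝ) → ℝ)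
    (hf : MemLp f 2 (uCube n)) (hh : MemLp h 2 (uCube n))
    (hvf : 0 < var' (uCube n) f) (hvh : 0 < var' (uCube n) h)
    (hvg : 0 < var' (uCube n) (f + h))
    (hcov : 0 ≤ cov' (uCube n) f h) :
    sobolT (uCube n) (updC i) (f + h) ≤
      (Real.sqrt (sobolT (uCube n) (updC i) f * var' (uCube n) f) +
          Real.sqrt (sobolT (uCube n) (updC i) h * var' (uCube n) h)) ^ 2 /
        (var' (uCube n) f + var' (uCube n) h) :=
  stmt6_general i f h hf hh hvf hvh hcov
end
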